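/- Let 0 < λ_min < λ_max be real numbers, let σ(x) = 1/(1+exp(−x)), and let M, W be n×n real matrices (n ≥ 1). Define M̃_{i,j} = λ_max − (λ_max − λ_min)·σ(M_{i,j}) and W̃_{i,j} = (exp(W_{i,j}) / Σ_{k} exp(W_{i,k})) · M̃_{i,j}. Then W̃ has all entries strictly positive and its spectral radius ρ(W̃) satisfies λ_min < ρ(W̃) < λ_max. -/

import Mathlib

open scoped BigOperators

/-- The logistic sigmoid. -/
noncomputable def logisticSigmoid (x : ℝ) : ℝ := 1 / (1 + Real.exp (-x))

/-- The Perron–Frobenius parametrized matrix: the row-wise softmax of `W` multiplied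
elementwise with the entries of `M` clamped to `(λ_min, λ_max)` via the sigmoid. -/
noncomputable def pfMatrix {n : ℕ} (lmin lmax : ℝ) (M W : Matrix (Fin n) (Fin n) ℝ) :
    Matrix (Fin n) (Fin n) ℝ :=
  Matrix.of fun i j =>
    (Real.exp (W i j) / ∑ k, Real.exp (W i k)) *
      (lmax - (lmax - lmin) * logisticSigmoid (M i j))

/-- The spectral radius of a real square matrix: the maximum (supremum) of the moduli of
its complex eigenvalues. -/
noncomputable def matrixSpectralRadius {n : ℕ} (A : Matrix (Fin n) (Fin n) ℝ) : ℝ :=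
  sSup ((fun μ : ℂ => ‖μ‖) '' spectrum ℂ (A.map Complex.ofReal))

/-!
Each row of the matrix is a convex combination, with softmax weights, of clamped entries lying in
the open interval `(λ_min, λ_max)`, so every row sum lies in that interval. For a nonnegative
matrix the `ℓ^∞` operator norm is the largest row sum, which bounds the spectral radius from
above. From below, if every row sum is at least `c` then `A ^ k *ᵥ 1 ≥ c ^ k • 1`, hence
`‖A ^ k‖ ≥ c ^ k`, and Gelfand's formula gives `ρ(A) ≥ c`; take `c` the smallest row sum.
-/

open scoped NNReal ENNReal

lemma logisticSigmoid_mem_Ioo (x : ℝ) : logisticSigmoid x ∈ Set.Ioo 0 1 := by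
  have hx := Real.exp_pos (-x)
  unfold logisticSigmoid
  exact ⟨by positivity, (div_lt_one (by positivity)).2 (by linarith)⟩

lemma sub_mul_logisticSigmoid_mem_Ioo {a b : ℝ} (hab : a < b) (x : ℝ) :
    b - (b - a) * logisticSigmoid x ∈ Set.Ioo a b := by
  obtain ⟨h0, h1⟩ := logisticSigmoid_mem_Ioo x
  constructor <;> nlinarith

lemma sum_exp_div_sum_exp {ι : Type*} [Fintype ι] [Nonempty ι] (v : ι → ℝ) :
    ∑ j, Real.exp (v j) / ∑ k, Real.exp (v k) = 1 := by
  rw [← Finset.sum_div, div_self (Finset.sum_pos (fun k _ => Real.exp_pos (v k))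
    Finset.univ_nonempty).ne']

lemma pfMatrix_pos {n : ℕ} {lmin lmax : ℝ} (h0 : 0 < lmin) (h : lmin < lmax)
    (M W : Matrix (Fin n) (Fin n) ℝ) (i j : Fin n) : 0 < pfMatrix lmin lmax M W i j := by
  have : Nonempty (Fin n) := ⟨i⟩
  have hM := (sub_mul_logisticSigmoid_mem_Ioo h (M i j)).1
  have hW : 0 < ∑ k, Real.exp (W i k) :=
    Finset.sum_pos (fun k _ => Real.exp_pos _) Finset.univ_nonempty
  simp only [pfMatrix, Matrix.of_apply]
  exact mul_pos (div_pos (Real.exp_pos _) hW) (h0.trans hM)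

lemma sum_pfMatrix_mem_Ioo {n : ℕ} {lmin lmax : ℝ} (h : lmin < lmax)
    (M W : Matrix (Fin n) (Fin n) ℝ) (i : Fin n) :
    ∑ j, pfMatrix lmin lmax M W i j ∈ Set.Ioo lmin lmax := by
  have : Nonempty (Fin n) := ⟨i⟩
  exact (convex_Ioo lmin lmax).sum_mem (fun j _ => by positivity) (sum_exp_div_sum_exp (W i))
    fun j _ => sub_mul_logisticSigmoid_mem_Ioo h (M i j)

theorem spectrum.ofReal_le_spectralRadius_of_pow_le_norm {A : Type*} [NormedRing A]
    [NormedAlgebra ℂ A] [CompleteSpace A] {a : A} {c : ℝ} (hc : 0 ≤ c)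
    (h : ∀ k : ℕ, c ^ k ≤ ‖a ^ k‖) : ENNReal.ofReal c ≤ spectralRadius ℂ a := by
  refine ge_of_tendsto (spectrum.pow_norm_pow_one_div_tendsto_nhds_spectralRadius a) ?_
  filter_upwards [Filter.eventually_ne_atTop 0] with k hk
  refine ENNReal.ofReal_le_ofReal ?_
  calc c = (c ^ k) ^ (1 / k : ℝ) := by rw [one_div, Real.pow_rpow_inv_natCast hc hk]
    _ ≤ ‖a ^ k‖ ^ (1 / k : ℝ) := by gcongr; exact h k

namespace Matrix

theorem pow_smul_one_le_pow_mulVec_one {R n : Type*} [Fintype n] [DecidableEq n] [CommSemiring R]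
    [PartialOrder R] [IsOrderedRing R] {A : Matrix n n R} (hA : ∀ i j, 0 ≤ A i j) {c : R}
    (hc : 0 ≤ c) (h : ∀ i, c ≤ ∑ j, A i j) (k : ℕ) : c ^ k • 1 ≤ A ^ k *ᵥ 1 := by
  have mulVec_mono : ∀ v w : n → R, v ≤ w → A *ᵥ v ≤ A *ᵥ w := fun v w hvw i =>
    Finset.sum_le_sum fun j _ => mul_le_mul_of_nonneg_left (hvw j) (hA i j)
  have hrow : c • 1 ≤ A *ᵥ 1 := fun i => by simpa [mulVec, dotProduct] using h i
  induction k with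
  | zero => simp
  | succ k ih =>
    calc c ^ (k + 1) • (1 : n → R) = c ^ k • c • 1 := by rw [pow_succ, mul_smul]
      _ ≤ c ^ k • (A *ᵥ 1) := smul_le_smul_of_nonneg_left hrow (pow_nonneg hc k)
      _ = A *ᵥ (c ^ k • 1) := (mulVec_smul A _ 1).symm
      _ ≤ A *ᵥ (A ^ k *ᵥ 1) := mulVec_mono _ _ ih
      _ = A ^ (k + 1) *ᵥ 1 := by rw [mulVec_mulVec, pow_succ']

end Matrix

section LinftyOpNorm

attribute [local instance] Matrix.linftyOpNormedAddCommGroup Matrix.linftyOpNormedRing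
  Matrix.linftyOpNormedAlgebra

namespace Matrix

variable {m n : Type*} [Fintype m] [Fintype n]

theorem linfty_opNorm_map_ofReal (A : Matrix m n ℝ) : ‖A.map Complex.ofReal‖ = ‖A‖ := by
  simp [linfty_opNorm_def]

theorem linfty_opNorm_lt_of_sum_lt [Nonempty m] {A : Matrix m n ℝ} (hA : ∀ i j, 0 ≤ A i j)
    {C : ℝ} (h : ∀ i, ∑ j, A i j < C) : ‖A‖ < C := by
  have hC : 0 < C := (Finset.sum_nonneg fun j _ => hA (Classical.arbitrary m) j).trans_lt (h _)
  lift C to ℝ≥0 using hC.le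
  rw [← coe_nnnorm, NNReal.coe_lt_coe, linfty_opNNNorm_def, Finset.sup_lt_iff (mod_cast hC)]
  intro i _
  rw [← NNReal.coe_lt_coe, NNReal.coe_sum]
  simpa [Real.norm_of_nonneg (hA i _)] using h i

theorem pow_le_linfty_opNorm_pow [Nonempty n] [DecidableEq n] {A : Matrix n n ℝ}
    (hA : ∀ i j, 0 ≤ A i j) {c : ℝ} (hc : 0 ≤ c) (h : ∀ i, c ≤ ∑ j, A i j) (k : ℕ) :
    c ^ k ≤ ‖A ^ k‖ := by
  have i : n := Classical.arbitrary n
  calc c ^ k ≤ (A ^ k *ᵥ 1) i := by simpa using pow_smul_one_le_pow_mulVec_one hA hc h k i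
    _ ≤ ‖A ^ k *ᵥ 1‖ := (le_abs_self _).trans (norm_le_pi_norm (A ^ k *ᵥ 1) i)
    _ ≤ ‖A ^ k‖ * ‖(1 : n → ℝ)‖ := linfty_opNorm_mulVec _ _
    _ = ‖A ^ k‖ := by rw [norm_one, mul_one]

end Matrix

variable {n : ℕ} [NeZero n]

theorem matrixSpectralRadius_eq_toReal_spectralRadius (A : Matrix (Fin n) (Fin n) ℝ) :
    matrixSpectralRadius A = (spectralRadius ℂ (A.map Complex.ofReal)).toReal := by
  obtain ⟨μ, hμ, hμr⟩ := spectrum.exists_nnnorm_eq_spectralRadius (A.map Complex.ofReal)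
  have hmax : IsGreatest ((‖·‖) '' spectrum ℂ (A.map Complex.ofReal)) ‖μ‖ := by
    refine ⟨⟨μ, hμ, rfl⟩, ?_⟩
    rintro _ ⟨ν, hν, rfl⟩
    have : (‖ν‖₊ : ℝ≥0∞) ≤ ‖μ‖₊ := hμr ▸ le_iSup₂ (α := ℝ≥0∞) ν hν
    exact_mod_cast this
  rw [matrixSpectralRadius, hmax.csSup_eq, ← hμr]
  rfl

theorem le_matrixSpectralRadius_of_le_sum {A : Matrix (Fin n) (Fin n) ℝ}
    (hA : ∀ i j, 0 ≤ A i j) {c : ℝ} (hc : 0 ≤ c) (h : ∀ i, c ≤ ∑ j, A i j) :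
    c ≤ matrixSpectralRadius A := by
  have hpow (k : ℕ) : c ^ k ≤ ‖A.map Complex.ofReal ^ k‖ := calc
    c ^ k ≤ ‖A ^ k‖ := Matrix.pow_le_linfty_opNorm_pow hA hc h k
    _ = ‖(A ^ k).map Complex.ofReal‖ := (Matrix.linfty_opNorm_map_ofReal _).symm
    _ = ‖A.map Complex.ofReal ^ k‖ := congrArg norm (Matrix.map_pow A Complex.ofRealHom k)
  have hfinite : spectralRadius ℂ (A.map Complex.ofReal) ≠ ⊤ :=
    (spectrum.spectralRadius_le_nnnorm _).trans_lt ENNReal.coe_lt_top |>.ne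
  rw [matrixSpectralRadius_eq_toReal_spectralRadius]
  exact (ENNReal.ofReal_le_iff_le_toReal hfinite).1
    (spectrum.ofReal_le_spectralRadius_of_pow_le_norm hc hpow)

theorem matrixSpectralRadius_lt_of_sum_lt {A : Matrix (Fin n) (Fin n) ℝ}
    (hA : ∀ i j, 0 ≤ A i j) {C : ℝ} (h : ∀ i, ∑ j, A i j < C) :
    matrixSpectralRadius A < C := by
  rw [matrixSpectralRadius_eq_toReal_spectralRadius]
  calc (spectralRadius ℂ (A.map Complex.ofReal)).toReal ≤ ‖A.map Complex.ofReal‖ := by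
        exact_mod_cast ENNReal.toReal_mono ENNReal.coe_ne_top (spectrum.spectralRadius_le_nnnorm _)
    _ = ‖A‖ := Matrix.linfty_opNorm_map_ofReal A
    _ < C := Matrix.linfty_opNorm_lt_of_sum_lt hA h

end LinftyOpNorm

/-- For `0 < λ_min < λ_max`, the Perron–Frobenius parametrized matrix has strictly
positive entries and its spectral radius lies strictly in `(λ_min, λ_max)`. -/
theorem stmt_3 {n : ℕ} (hn : 1 ≤ n) (lmin lmax : ℝ) (h0 : 0 < lmin) (h : lmin < lmax)
    (M W : Matrix (Fin n) (Fin n) ℝ) :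
    (∀ i j, 0 < pfMatrix lmin lmax M W i j) ∧
      lmin < matrixSpectralRadius (pfMatrix lmin lmax M W) ∧
        matrixSpectralRadius (pfMatrix lmin lmax M W) < lmax := by
  have : NeZero n := ⟨by omega⟩
  have hpos := pfMatrix_pos h0 h M W
  have hrow := sum_pfMatrix_mem_Ioo h M W
  obtain ⟨i₀, hi₀⟩ := Finite.exists_min fun i => ∑ j, pfMatrix lmin lmax M W i j
  refine ⟨hpos, (hrow i₀).1.trans_le ?_,
    matrixSpectralRadius_lt_of_sum_lt (fun i j => (hpos i j).le) fun i => (hrow i).2⟩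
  exact le_matrixSpectralRadius_of_le_sum (fun i j => (hpos i j).le)
    (h0.trans (hrow i₀).1).le hi₀
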